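/- arXiv:1210.4545 — 2 statements merged into one kernel-verified Lean document; each statement's English description precedes it below -/
import Mathlib

section
/- Let 0 < β < 1 and define w_β(t) = cos((1−β)t/2) / (sin(t/2))^{1−β} for t ∈ (0, π]. There exists a constant c(β) > 0 such that for all integers n ≥ 3, all integers i with 1 ≤ i ≤ (n−1)/2, and all t ∈ [0, π/n], |w_β(t + 2iπ/n) − w_β(t + (2i+1)π/n)| ≤ c(β) · n^{1−β} / i^{2−β}. -/
/-!
Mean value theorem. By `cos (x/2 - (1-β)x/2) = cos (βx/2)` the two terms of the derivative of
`w_β` combine into `-(1-β)/2 · cos (βx/2) / sin (x/2)^(2-β)`, so `|w_β'| ≤ (1-β)/2 · m^(β-2)`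
wherever `sin (x/2) ≥ m`. On `[2iπ/n, 2(i+1)π/n]` the half-angle lies in `[iπ/n, π - iπ/n]`, where
concavity of `sin` and Jordan's inequality give `sin (x/2) ≥ sin (iπ/n) ≥ 2i/n`. Taking `m = i/n`
on an interval of length `π/n` yields the bound with `c = (1-β)π/2`.
-/

open Filter

noncomputable section

/-- `w_β(t) = cos((1-β)t/2) / (sin(t/2))^{1-β}`. -/
def wCoef (β t : ℝ) : ℝ := Real.cos ((1 - β) * t / 2) / (Real.sin (t / 2)) ^ (1 - β)

open Real Set

theorem sin_le_sin_of_mem_Icc_pi_sub {a y : ℝ} (ha : 0 ≤ a) (hy : y ∈ Icc a (π - a)) :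
    sin a ≤ sin y := by
  have hmem : ∀ z ∈ Icc a (π - a), z ∈ Icc 0 π := fun z hz =>
    ⟨by linarith [hz.1], by linarith [hz.2]⟩
  have hle : a ≤ π - a := hy.1.trans hy.2
  simpa [sin_pi_sub] using
    strictConcaveOn_sin_Icc.concaveOn.min_le_of_mem_Icc (hmem a ⟨le_rfl, hle⟩)
      (hmem _ ⟨hle, le_rfl⟩) hy

theorem hasDerivAt_wCoef (β : ℝ) {x : ℝ} (hx : 0 < sin (x / 2)) :
    HasDerivAt (wCoef β) (-((1 - β) / 2) * cos (β * x / 2) / sin (x / 2) ^ (2 - β)) x := by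
  have hcos : HasDerivAt (fun t => cos ((1 - β) * t / 2))
      (-sin ((1 - β) * x / 2) * ((1 - β) / 2)) x := by
    simpa [mul_div_assoc] using ((hasDerivAt_id x).const_mul (1 - β)).div_const 2 |>.cos
  have hsin : HasDerivAt (fun t => sin (t / 2)) (cos (x / 2) * (1 / 2)) x :=
    ((hasDerivAt_id x).div_const 2).sin
  have hpow := hsin.rpow_const (p := 1 - β) (Or.inl hx.ne')
  refine (hcos.div hpow (rpow_pos_of_pos hx _).ne').congr_deriv ?_
  have hS : sin (x / 2) ^ (1 - β) = sin (x / 2) ^ (1 - β - 1) * sin (x / 2) := by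
    rw [← rpow_add_one hx.ne']; ring_nf
  have hS2 : sin (x / 2) ^ (2 - β) = sin (x / 2) ^ (1 - β - 1) * sin (x / 2) * sin (x / 2) := by
    rw [← rpow_add_one hx.ne', ← rpow_add_one hx.ne']; ring_nf
  have hβx : β * x / 2 = x / 2 - (1 - β) * x / 2 := by ring
  rw [hS2, hS, hβx, cos_sub]
  have : sin (x / 2) ^ (1 - β - 1) ≠ 0 := (rpow_pos_of_pos hx _).ne'
  field_simp
  ring

theorem abs_wCoef_sub_le {β a b m : ℝ} (hβ : β ≤ 2) (hm : 0 < m) (hab : a ≤ b)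
    (hsin : ∀ x ∈ Icc a b, m ≤ sin (x / 2)) :
    |wCoef β a - wCoef β b| ≤ |1 - β| / 2 / m ^ (2 - β) * (b - a) := by
  have hderiv_le : ∀ x ∈ Icc a b,
      ‖-((1 - β) / 2) * cos (β * x / 2) / sin (x / 2) ^ (2 - β)‖ ≤ |1 - β| / 2 / m ^ (2 - β) := by
    intro x hx
    have hmx := hsin x hx
    rw [Real.norm_eq_abs, abs_div, abs_mul, abs_neg, abs_div, abs_two,
      abs_of_pos (rpow_pos_of_pos (hm.trans_le hmx) _)]
    gcongr
    exact mul_le_of_le_one_right (by positivity) (abs_cos_le_one _)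
  have hMVT := (convex_Icc a b).norm_image_sub_le_of_norm_hasDerivWithin_le
    (fun x hx => (hasDerivAt_wCoef β (hm.trans_le (hsin x hx))).hasDerivWithinAt) hderiv_le
    (left_mem_Icc.2 hab) (right_mem_Icc.2 hab)
  rwa [Real.norm_eq_abs, Real.norm_eq_abs, abs_sub_comm, abs_of_nonneg (sub_nonneg.2 hab)] at hMVT

theorem two_mul_div_le_sin_half {i n x : ℝ} (hi : 0 ≤ i) (hin : 2 * i + 1 ≤ n)
    (hx : x ∈ Icc (2 * i * π / n) (2 * (i + 1) * π / n)) : 2 * i / n ≤ sin (x / 2) := by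
  have hn : 0 < n := by linarith
  have hin_pi : 2 * (i * π / n) + π / n ≤ π := by
    calc 2 * (i * π / n) + π / n = (2 * i + 1) / n * π := by ring
      _ ≤ π := mul_le_of_le_one_left pi_pos.le ((div_le_one₀ hn).2 hin)
  have hπn : 0 ≤ π / n := by positivity
  have hx₁ : 2 * i * π / n = 2 * (i * π / n) := by ring
  have hx₂ : 2 * (i + 1) * π / n = 2 * (i * π / n) + 2 * (π / n) := by ring
  have hmem : x / 2 ∈ Icc (i * π / n) (π - i * π / n) :=
    ⟨by linarith [hx.1], by linarith [hx.2]⟩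
  calc 2 * i / n = 2 / π * (i * π / n) := by field_simp
    _ ≤ sin (i * π / n) := mul_le_sin (by positivity) (by linarith)
    _ ≤ sin (x / 2) := sin_le_sin_of_mem_Icc_pi_sub (by positivity) hmem

theorem wCoef_difference_estimate_general (β : ℝ) (hβ1 : β < 1) :
    ∃ c : ℝ, 0 < c ∧ ∀ n : ℕ, 3 ≤ n → ∀ i : ℕ, 1 ≤ i → 2 * i ≤ n - 1 →
      ∀ t : ℝ, 0 ≤ t → t ≤ Real.pi / n →
        |wCoef β (t + 2 * i * Real.pi / n) - wCoef β (t + (2 * i + 1) * Real.pi / n)| ≤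
          c * (n : ℝ) ^ (1 - β) / (i : ℝ) ^ (2 - β) := by
  refine ⟨(1 - β) * π / 2, by nlinarith [pi_pos], fun n _ i hi hin t ht0 htn => ?_⟩
  have hi0 : (0 : ℝ) < i := by exact_mod_cast hi
  have hin' : 2 * (i : ℝ) + 1 ≤ n := by exact_mod_cast (by omega : 2 * i + 1 ≤ n)
  have hn0 : (0 : ℝ) < n := by linarith
  set a := t + 2 * i * π / n
  have hb : t + (2 * i + 1) * π / n = a + π / n := by ring
  have hsin : ∀ x ∈ Icc a (a + π / n), (i : ℝ) / n ≤ sin (x / 2) := by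
    intro x hx
    have hend : 2 * (i + 1) * π / n = 2 * i * π / n + 2 * (π / n) := by ring
    exact (div_le_div_of_nonneg_right (by linarith) hn0.le).trans
      (two_mul_div_le_sin_half hi0.le hin' ⟨by linarith [hx.1], by linarith [hx.2]⟩)
  have hab := abs_wCoef_sub_le (β := β) (by linarith) (by positivity)
    (le_add_of_nonneg_right (by positivity)) hsin
  rw [hb]
  refine hab.trans_eq ?_
  rw [abs_of_pos (by linarith), add_sub_cancel_left, div_rpow hi0.le hn0.le,
    show (2 : ℝ) - β = 1 - β + 1 by ring, rpow_add_one hn0.ne', rpow_add_one hi0.ne']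
  have : (n : ℝ) ^ (1 - β) ≠ 0 := (rpow_pos_of_pos hn0 _).ne'
  have : (i : ℝ) ^ (1 - β) ≠ 0 := (rpow_pos_of_pos hi0 _).ne'
  field_simp

/-- **Inequality (11) of Goginava–Sahakian.**
For `0 < β < 1` there is `c(β) > 0` such that for all `n ≥ 3`, all `1 ≤ i ≤ (n-1)/2` and
all `t ∈ [0, π/n]`,
`|w_β(t + 2iπ/n) - w_β(t + (2i+1)π/n)| ≤ c(β) n^{1-β} / i^{2-β}`. -/
theorem wCoef_difference_estimate (β : ℝ) (hβ0 : 0 < β) (hβ1 : β < 1) :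
    ∃ c : ℝ, 0 < c ∧ ∀ n : ℕ, 3 ≤ n → ∀ i : ℕ, 1 ≤ i → 2 * i ≤ n - 1 →
      ∀ t : ℝ, 0 ≤ t → t ≤ Real.pi / n →
        |wCoef β (t + 2 * i * Real.pi / n) - wCoef β (t + (2 * i + 1) * Real.pi / n)| ≤
          c * (n : ℝ) ^ (1 - β) / (i : ℝ) ^ (2 - β) :=
  wCoef_difference_estimate_general β hβ1

end
end

section
/- Let 0 < α, β < 1 with α + β < 1, and let Λ = {λ_k} be an increasing sequence of positive numbers with λ₁ > 1 and λ_k → ∞ such that λ_k / k^{1−(α+β)} decreases to 0. Write λ_j = j^{1−(α+β)} γ_j (so that γ_j is nonincreasing) and t_j := (Σ_{i=1}^{j} 1/λ_i)^{−1}. If Σ_{k=1}^∞ λ_k / k^{2−(α+β)} = ∞, then for every integer j₀ ≥ 1, Σ_{j=j₀}^{[(N−1)/2]} t_j / j^{1−(α+β)} → ∞ as N → ∞; in particular Σ_{j=j₀}^{∞} γ_j / j = ∞. -/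
/-!
Write `p = α + β` and `γ_j = λ_j / j^{1-p}`. Since `γ` is nonincreasing, `λ_i ≥ γ_j i^{1-p}`
for `i ≤ j`, and `Σ_{i ≤ j} i^{p-1} ≤ j^p / p` (Bernoulli) turns this into
`Σ_{i ≤ j} 1/λ_i ≤ j / (p λ_j)`, i.e. `t_j ≥ p λ_j / j`. Hence
`t_j / j^{1-p} ≥ p λ_j / j^{2-p} = p γ_j / j`, and both claims follow from the divergence of
`Σ λ_k / k^{2-p}`.
-/

open Filter Finset

noncomputable section

/-- `t_j = (Σ_{i=1}^j 1/λ_i)⁻¹`. -/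
def tcoef (lam : ℕ → ℝ) (j : ℕ) : ℝ := (∑ i ∈ Finset.Icc 1 j, 1 / lam i)⁻¹

open Real

section PowerSums

variable {p : ℝ}

/-- Bernoulli's inequality `(1 - 1/x)^p ≤ 1 - p/x`, multiplied by `x^p`. -/
lemma rpow_sub_one_le_sub_rpow_div (hp0 : 0 < p) (hp1 : p ≤ 1) {x : ℝ} (hx : 1 ≤ x) :
    x ^ (p - 1) ≤ (x ^ p - (x - 1) ^ p) / p := by
  have hx0 : 0 < x := by linarith
  have hB : (1 + -x⁻¹) ^ p ≤ 1 + p * -x⁻¹ :=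
    rpow_one_add_le_one_add_mul_self (by linarith [inv_le_one_of_one_le₀ hx]) hp0.le hp1
  have hscale : (1 + -x⁻¹) ^ p * x ^ p = (x - 1) ^ p := by
    rw [← mul_rpow (by linarith [inv_le_one_of_one_le₀ hx]) hx0.le]
    congr 1
    field_simp
    ring
  have hmul := mul_le_mul_of_nonneg_right hB (rpow_nonneg hx0.le p)
  rw [hscale] at hmul
  rw [rpow_sub_one hx0.ne', le_div_iff₀ hp0]
  calc x ^ p / x * p = (1 - (1 + p * -x⁻¹)) * x ^ p := by field_simp; ring
    _ ≤ x ^ p - (x - 1) ^ p := by linarith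

lemma sum_Icc_rpow_sub_one_le (hp0 : 0 < p) (hp1 : p ≤ 1) (n : ℕ) :
    ∑ i ∈ Icc 1 n, (i : ℝ) ^ (p - 1) ≤ (n : ℝ) ^ p / p := by
  induction n with
  | zero => simp [zero_rpow hp0.ne']
  | succ n ih =>
    rw [sum_Icc_succ_top (by omega)]
    have hstep := rpow_sub_one_le_sub_rpow_div hp0 hp1 (x := (n + 1 : ℕ)) (by simp)
    push_cast at hstep ⊢
    rw [add_sub_cancel_right] at hstep
    calc _ ≤ (n : ℝ) ^ p / p + (((n : ℝ) + 1) ^ p - (n : ℝ) ^ p) / p := add_le_add ih hstep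
      _ = _ := by ring

end PowerSums

section Tcoef

variable {p : ℝ} {lam : ℕ → ℝ} {n : ℕ}

lemma sum_Icc_one_div_le (hp0 : 0 < p) (hp1 : p ≤ 1) (hn : 1 ≤ n)
    (hlam : ∀ i ∈ Icc 1 n, 0 < lam i)
    (hγ : ∀ i ∈ Icc 1 n, lam n / (n : ℝ) ^ (1 - p) ≤ lam i / (i : ℝ) ^ (1 - p)) :
    ∑ i ∈ Icc 1 n, 1 / lam i ≤ n / (p * lam n) := by
  have hn0 : (0 : ℝ) < n := by exact_mod_cast hn
  set γ := lam n / (n : ℝ) ^ (1 - p) with hγdef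
  have hγpos : 0 < γ := div_pos (hlam n (by simp [hn])) (rpow_pos_of_pos hn0 _)
  calc ∑ i ∈ Icc 1 n, 1 / lam i ≤ ∑ i ∈ Icc 1 n, (i : ℝ) ^ (p - 1) / γ := by
        refine sum_le_sum fun i hi => ?_
        have hi0 : (0 : ℝ) < i := by exact_mod_cast (mem_Icc.1 hi).1
        have hlow : γ * (i : ℝ) ^ (1 - p) ≤ lam i :=
          (le_div_iff₀ (rpow_pos_of_pos hi0 _)).1 (hγ i hi)
        calc 1 / lam i ≤ 1 / (γ * (i : ℝ) ^ (1 - p)) :=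
              one_div_le_one_div_of_le (by positivity) hlow
          _ = (i : ℝ) ^ (p - 1) / γ := by
              rw [show p - 1 = -(1 - p) by ring, rpow_neg hi0.le]; field_simp
    _ = (∑ i ∈ Icc 1 n, (i : ℝ) ^ (p - 1)) / γ := by rw [sum_div]
    _ ≤ (n : ℝ) ^ p / p / γ := by gcongr; exact sum_Icc_rpow_sub_one_le hp0 hp1 n
    _ = n / (p * lam n) := by
        have hsplit : (n : ℝ) ^ p * (n : ℝ) ^ (1 - p) = n := by
          rw [← rpow_add hn0, add_sub_cancel, rpow_one]
        rw [hγdef]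
        field_simp
        rw [hsplit]

lemma mul_div_le_tcoef (hp0 : 0 < p) (hp1 : p ≤ 1) (hn : 1 ≤ n)
    (hlam : ∀ i ∈ Icc 1 n, 0 < lam i)
    (hγ : ∀ i ∈ Icc 1 n, lam n / (n : ℝ) ^ (1 - p) ≤ lam i / (i : ℝ) ^ (1 - p)) :
    p * lam n / n ≤ tcoef lam n := by
  have hsum_pos : 0 < ∑ i ∈ Icc 1 n, 1 / lam i :=
    sum_pos (fun i hi => one_div_pos.2 (hlam i hi)) ⟨1, by simp [hn]⟩
  simpa [tcoef] using inv_anti₀ hsum_pos (sum_Icc_one_div_le hp0 hp1 hn hlam hγ)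

end Tcoef

lemma tendsto_sum_Icc_atTop_of_not_summable {f : ℕ → ℝ} (hf : ∀ n, 0 ≤ f n)
    (h : ¬Summable f) (a : ℕ) : Tendsto (fun n => ∑ i ∈ Icc a n, f i) atTop atTop := by
  have hrange := ((not_summable_iff_tendsto_nat_atTop_of_nonneg hf).1 h).comp
    (tendsto_add_atTop_nat 1)
  refine (tendsto_atTop_add_const_right _ (-∑ i ∈ range a, f i) hrange).congr' ?_
  filter_upwards [eventually_ge_atTop a] with n hn
  rw [← Ico_add_one_right_eq_Icc, sum_Ico_eq_sub _ (by omega), Function.comp_apply, sub_eq_add_neg]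

theorem tcoef_partial_sums_unbounded_general
    (α β : ℝ) (hα0 : 0 < α) (hβ0 : 0 < β)
    (hαβ : α + β < 1)
    (lam : ℕ → ℝ)
    (hlam_pos : ∀ k, 1 ≤ k → 0 < lam k)
    (hdec : ∀ k, 1 ≤ k →
      lam (k + 1) / ((k : ℝ) + 1) ^ (1 - (α + β)) ≤ lam k / (k : ℝ) ^ (1 - (α + β)))
    (hdiv : ¬ Summable (fun k : ℕ => lam (k + 1) / ((k : ℝ) + 1) ^ (2 - (α + β)))) :
    (∀ j₀ : ℕ, 1 ≤ j₀ →
      Tendsto (fun N : ℕ =>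
        ∑ j ∈ Finset.Icc j₀ ((N - 1) / 2), tcoef lam j / (j : ℝ) ^ (1 - (α + β)))
        atTop atTop) ∧
    (∀ j₀ : ℕ, 1 ≤ j₀ →
      ¬ Summable (fun j : ℕ =>
        (lam (j + j₀) / ((j : ℝ) + (j₀ : ℝ)) ^ (1 - (α + β))) / ((j : ℝ) + (j₀ : ℝ)))) := by
  set p := α + β
  have hp0 : 0 < p := add_pos hα0 hβ0
  set F : ℕ → ℝ := fun k => lam k / (k : ℝ) ^ (2 - p) with hF
  have hF_eq : ∀ k : ℕ, 0 < k → F k = lam k / (k : ℝ) ^ (1 - p) / k := fun k hk => by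
    rw [hF, div_div, ← rpow_add_one (Nat.cast_pos.2 hk).ne']
    ring_nf
  have hF_nonneg : ∀ k, 0 ≤ F k := by
    rintro (_ | k)
    · simp [hF, zero_rpow (by linarith : (2 : ℝ) - p ≠ 0)]
    · exact (div_pos (hlam_pos _ (by omega)) (by positivity)).le
  have hF_not_summable : ¬Summable F := fun h =>
    hdiv (by simpa [hF] using (summable_nat_add_iff 1).2 h)
  have hγ : AntitoneOn (fun k : ℕ => lam k / (k : ℝ) ^ (1 - p)) {k | 1 ≤ k} :=
    antitoneOn_nat_Ici_of_succ_le fun k hk => by simpa using hdec k hk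
  have hterm : ∀ j, 1 ≤ j → p * F j ≤ tcoef lam j / (j : ℝ) ^ (1 - p) := fun j hj => by
    have := mul_div_le_tcoef (lam := lam) hp0 hαβ.le hj (fun i hi => hlam_pos i (mem_Icc.1 hi).1)
      (fun i hi => hγ (mem_Icc.1 hi).1 hj (mem_Icc.1 hi).2)
    calc p * F j = p * lam j / j / (j : ℝ) ^ (1 - p) := by rw [hF_eq j hj]; ring
      _ ≤ tcoef lam j / (j : ℝ) ^ (1 - p) := by gcongr
  refine ⟨fun j₀ hj₀ => ?_, fun j₀ hj₀ h => hF_not_summable ((summable_nat_add_iff j₀).1 ?_)⟩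
  · have hpF := (tendsto_sum_Icc_atTop_of_not_summable hF_nonneg hF_not_summable j₀
      ).const_mul_atTop hp0
    have hsum : Tendsto (fun M => ∑ j ∈ Icc j₀ M, tcoef lam j / (j : ℝ) ^ (1 - p)) atTop atTop :=
      tendsto_atTop_mono (fun M => by
        rw [mul_sum]
        exact sum_le_sum fun j hj => hterm j (hj₀.trans (mem_Icc.1 hj).1)) hpF
    exact hsum.comp ((Nat.tendsto_div_const_atTop two_ne_zero).comp (tendsto_sub_atTop_nat 1))
  · refine h.congr fun j => ?_
    rw [hF_eq _ (by omega)]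
    push_cast
    rfl

/-- **Estimate (39) of Goginava–Sahakian.**
If `Λ = {λ_k}` is increasing, `λ₁ > 1`, `λ_k → ∞`, `λ_k / k^{1-(α+β)} ↓ 0` and
`Σ λ_k / k^{2-(α+β)} = ∞`, then for every `j₀ ≥ 1` the partial sums
`Σ_{j=j₀}^{[(N-1)/2]} t_j / j^{1-(α+β)}` tend to `∞` as `N → ∞`; in particular, with
`γ_j = λ_j / j^{1-(α+β)}`, the series `Σ_{j≥j₀} γ_j / j` diverges. -/
theorem tcoef_partial_sums_unbounded
    (α β : ℝ) (hα0 : 0 < α) (hα1 : α < 1) (hβ0 : 0 < β) (hβ1 : β < 1)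
    (hαβ : α + β < 1)
    (lam : ℕ → ℝ)
    (hlam_pos : ∀ k, 1 ≤ k → 0 < lam k)
    (hlam1 : 1 < lam 1)
    (hlam_mono : ∀ k, 1 ≤ k → lam k ≤ lam (k + 1))
    (hlam_top : Tendsto lam atTop atTop)
    (hdec : ∀ k, 1 ≤ k →
      lam (k + 1) / ((k : ℝ) + 1) ^ (1 - (α + β)) ≤ lam k / (k : ℝ) ^ (1 - (α + β)))
    (hzero : Tendsto (fun k : ℕ => lam k / (k : ℝ) ^ (1 - (α + β))) atTop (nhds 0))
    (hdiv : ¬ Summable (fun k : ℕ => lam (k + 1) / ((k : ℝ) + 1) ^ (2 - (α + β)))) :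
    (∀ j₀ : ℕ, 1 ≤ j₀ →
      Tendsto (fun N : ℕ =>
        ∑ j ∈ Finset.Icc j₀ ((N - 1) / 2), tcoef lam j / (j : ℝ) ^ (1 - (α + β)))
        atTop atTop) ∧
    (∀ j₀ : ℕ, 1 ≤ j₀ →
      ¬ Summable (fun j : ℕ =>
        (lam (j + j₀) / ((j : ℝ) + (j₀ : ℝ)) ^ (1 - (α + β))) / ((j : ℝ) + (j₀ : ℝ)))) :=
  tcoef_partial_sums_unbounded_general α β hα0 hβ0 hαβ lam hlam_pos hdec hdiv

end
end
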